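/- Let f : 𝕋 → ℂ \ {0} be an (L, ℓ)-bi-Lipschitz embedding, let r = min_{z ∈ 𝕋} |f(z)| > 0, and let g : 𝕋 → ℂ \ {0} be a winding symmetrization of f, i.e. a homeomorphism with g(-z) = -g(z) and f(W(z)) = W(g(z)) for all z, where W(re^(iθ)) = re^(2iθ). Then g is (πL, rℓ/(2πL))-bi-Lipschitz. -/

import Mathlib

open Real Complex

noncomputable def windingMap (z : ℂ) : ℂ := z ^ 2 / (‖z‖ : ℂ)

/-!
Two estimates on the winding map `W` drive the proof: `W` does not shrink distances between
points in a common half-plane, and `r * |W u - W v| ≤ |u² - v²|` when `|u|, |v| ≥ r`.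
Since `|g| = |f ∘ W| ≥ r`, two values of `g` at distance `< r` lie in a common half-plane, so
there `|g z - g w| ≤ |f (W z) - f (W w)| ≤ L |z² - w²| ≤ 2L |z - w|`. A continuous function on the
circle that is `2L`-Lipschitz at small scales is `2L`-Lipschitz for arc length, hence
`πL`-Lipschitz for chord length. For the lower bound,
`r ℓ |a - b| |a + b| ≤ r |W (g a) - W (g b)| ≤ |g a - g b| |g a + g b|`, and oddness of `g` together
with the upper bound gives `|g a + g b| = |g a - g (-b)| ≤ πL |a + b|`.
-/

open Metric Set Filter Topology ComplexConjugate

lemma norm_windingMap (z : ℂ) : ‖windingMap z‖ = ‖z‖ := by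
  rcases eq_or_ne z 0 with rfl | hz
  · simp [windingMap]
  · rw [windingMap, norm_div, norm_pow, norm_real, norm_norm, sq,
      mul_div_cancel_right₀ _ (norm_ne_zero_iff.mpr hz)]

lemma windingMap_mem_sphere {z : ℂ} (hz : z ∈ sphere (0 : ℂ) 1) :
    windingMap z ∈ sphere (0 : ℂ) 1 := by
  rwa [mem_sphere_zero_iff_norm, norm_windingMap, ← mem_sphere_zero_iff_norm]

lemma norm_sq_sub_sq (z w : ℂ) : ‖z ^ 2 - w ^ 2‖ = ‖z - w‖ * ‖z + w‖ := by
  rw [← norm_mul]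
  ring_nf

lemma norm_windingMap_sub_windingMap {z w : ℂ} (hz : z ∈ sphere (0 : ℂ) 1)
    (hw : w ∈ sphere (0 : ℂ) 1) :
    ‖windingMap z - windingMap w‖ = ‖z - w‖ * ‖z + w‖ := by
  rw [mem_sphere_zero_iff_norm] at hz hw
  simp [windingMap, hz, hw, norm_sq_sub_sq]

lemma re_sq (w : ℂ) : (w ^ 2).re = 2 * w.re ^ 2 - ‖w‖ ^ 2 := by
  rw [sq, mul_re]
  linear_combination sq_norm_sub_sq_re w

lemma sq_norm_sub (u v : ℂ) : ‖u - v‖ ^ 2 = ‖u‖ ^ 2 + ‖v‖ ^ 2 - 2 * (u * conj v).re := by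
  simp only [Complex.sq_norm, normSq_sub]

lemma sq_norm_sq_sub_sq (u v : ℂ) :
    ‖u ^ 2 - v ^ 2‖ ^ 2 = (‖u‖ ^ 2 + ‖v‖ ^ 2) ^ 2 - 4 * (u * conj v).re ^ 2 := by
  rw [sq_norm_sub, map_pow, ← mul_pow, re_sq, norm_pow, norm_pow, norm_mul, norm_conj]
  ring

lemma re_windingMap_mul_conj (u v : ℂ) :
    (windingMap u * conj (windingMap v)).re = ((u * conj v) ^ 2).re / (‖u‖ * ‖v‖) := by
  have : windingMap u * conj (windingMap v) = (u * conj v) ^ 2 / ((‖u‖ * ‖v‖ : ℝ) : ℂ) := by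
    simp only [windingMap, map_div₀, map_pow, conj_ofReal]
    push_cast
    ring
  rw [this, div_ofReal_re]

lemma sq_norm_windingMap_sub (u v : ℂ) :
    ‖windingMap u - windingMap v‖ ^ 2
      = (‖u‖ + ‖v‖) ^ 2 - 4 * (u * conj v).re ^ 2 / (‖u‖ * ‖v‖) := by
  rw [sq_norm_sub, re_windingMap_mul_conj, re_sq, norm_windingMap, norm_windingMap, norm_mul,
    norm_conj]
  rcases eq_or_ne u 0 with rfl | hu
  · simp
  rcases eq_or_ne v 0 with rfl | hv
  · simp
  have := norm_pos_iff.mpr hu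
  have := norm_pos_iff.mpr hv
  field_simp
  ring

lemma norm_sub_le_norm_windingMap_sub {u v : ℂ} (h : 0 ≤ (u * conj v).re) :
    ‖u - v‖ ≤ ‖windingMap u - windingMap v‖ := by
  have hX : (u * conj v).re ≤ ‖u‖ * ‖v‖ := by
    simpa [norm_mul] using re_le_norm (u * conj v)
  have hY : (u * conj v).re ^ 2 / (‖u‖ * ‖v‖) ≤ (u * conj v).re := by
    rw [sq, mul_div_assoc]
    exact mul_le_of_le_one_right h (div_le_one_of_le₀ hX (by positivity))
  rw [← pow_le_pow_iff_left₀ (norm_nonneg _) (norm_nonneg _) two_ne_zero, sq_norm_sub,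
    sq_norm_windingMap_sub, mul_div_assoc]
  nlinarith

lemma mul_norm_windingMap_sub_le {u v : ℂ} {r : ℝ} (hr : 0 < r) (hu : r ≤ ‖u‖) (hv : r ≤ ‖v‖) :
    r * ‖windingMap u - windingMap v‖ ≤ ‖u ^ 2 - v ^ 2‖ := by
  have hX : |(u * conj v).re| ≤ ‖u‖ * ‖v‖ := by
    simpa only [norm_mul, norm_conj] using abs_re_le_norm (u * conj v)
  rw [← pow_le_pow_iff_left₀ (by positivity) (norm_nonneg _) two_ne_zero, mul_pow,
    sq_norm_windingMap_sub, sq_norm_sq_sub_sq]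
  generalize (u * conj v).re = X at *
  generalize ‖u‖ = s at *
  generalize ‖v‖ = t at *
  have hp : r ^ 2 ≤ s * t := by rw [sq]; exact mul_le_mul hu hv hr.le (hr.le.trans hu)
  have hp0 : 0 < s * t := (pow_pos hr 2).trans_le hp
  have hY : X ^ 2 / (s * t) ≤ s * t := by
    rw [div_le_iff₀ hp0, ← sq, ← sq_abs]
    exact pow_le_pow_left₀ (abs_nonneg _) hX 2
  have hXY : X ^ 2 = s * t * (X ^ 2 / (s * t)) := (mul_div_cancel₀ _ hp0.ne').symm
  rw [mul_div_assoc]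
  generalize X ^ 2 / (s * t) = Y at *
  -- (s² + t²)² - r²(s + t)² - 4st(st - r²) = (s - t)²((s + t)² - r²)
  nlinarith [mul_le_mul_of_nonneg_right hY (sub_nonneg.mpr hp),
    mul_nonneg (sq_nonneg (s - t)) (sub_nonneg.mpr (show r ^ 2 ≤ (s + t) ^ 2 by nlinarith))]

lemma re_mul_conj_nonneg_of_norm_sub_le {u v : ℂ} (h : ‖u - v‖ ≤ ‖v‖) :
    0 ≤ (u * conj v).re := by
  have := sq_norm_sub u v
  nlinarith [norm_nonneg (u - v), sq_nonneg ‖u‖]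

theorem dist_le_mul_dist_of_forall_dist_lt {E : Type*} [PseudoMetricSpace E] {q : ℝ → E}
    {r K : ℝ} (hq : Continuous q) (hr : 0 < r)
    (hloc : ∀ s t, dist (q s) (q t) < r → dist (q s) (q t) ≤ K * dist s t) (a b : ℝ) :
    dist (q a) (q b) ≤ K * dist a b := by
  wlog hab : a ≤ b generalizing a b
  · rw [dist_comm, dist_comm a]
    exact this b a (le_of_not_ge hab)
  let A := {t | dist (q a) (q t) ≤ K * (t - a)}
  have hA : IsClosed (A ∩ Icc a b) :=
    (isClosed_le (by fun_prop) (by fun_prop)).inter isClosed_Icc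
  have hstep : ∀ x ∈ A ∩ Ico a b, A ∈ 𝓝[>] x := by
    rintro x ⟨hxA, -⟩
    have hnear : ∀ᶠ t in 𝓝 x, dist (q x) (q t) < r :=
      (hq.tendsto x).eventually (ball_mem_nhds (q x) hr) |>.mono fun t ht => by rwa [dist_comm]
    filter_upwards [nhdsWithin_le_nhds hnear, self_mem_nhdsWithin] with t ht (hxt : x < t)
    calc dist (q a) (q t) ≤ dist (q a) (q x) + dist (q x) (q t) := dist_triangle _ _ _
      _ ≤ K * (x - a) + K * (t - x) := by
        rw [← abs_of_pos (sub_pos.mpr hxt), ← Real.dist_eq, dist_comm t]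
        exact add_le_add hxA (hloc x t ht)
      _ = K * (t - a) := by ring
  have hb : b ∈ A := hA.Icc_subset_of_forall_mem_nhdsWithin (by simp [A]) hstep ⟨hab, le_rfl⟩
  rwa [Real.dist_eq, abs_of_nonpos (sub_nonpos.mpr hab), neg_sub]

lemma circleMap_zero_one_arg {z : ℂ} (hz : ‖z‖ = 1) : circleMap 0 1 (arg z) = z := by
  simpa [circleMap_zero, hz] using norm_mul_exp_arg_mul_I z

theorem dist_le_pi_div_two_mul_dist_of_forall_dist_lt {E : Type*} [PseudoMetricSpace E]
    {g : ℂ → E} {r K : ℝ} (hg : ContinuousOn g (sphere 0 1)) (hr : 0 < r) (hK : 0 ≤ K)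
    (hloc : ∀ z ∈ sphere (0 : ℂ) 1, ∀ w ∈ sphere (0 : ℂ) 1,
      dist (g z) (g w) < r → dist (g z) (g w) ≤ K * dist z w)
    {x y : ℂ} (hx : x ∈ sphere 0 1) (hy : y ∈ sphere 0 1) :
    dist (g x) (g y) ≤ π / 2 * K * dist x y := by
  have hmem (t : ℝ) : circleMap 0 1 t ∈ sphere (0 : ℂ) 1 := by simp
  have hq : Continuous (g ∘ circleMap 0 1) :=
    hg.comp_continuous (continuous_circleMap 0 1) hmem
  have hqloc (s t : ℝ) (h : dist (g (circleMap 0 1 s)) (g (circleMap 0 1 t)) < r) :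
      dist (g (circleMap 0 1 s)) (g (circleMap 0 1 t)) ≤ K * dist s t :=
    (hloc _ (hmem s) _ (hmem t) h).trans <| mul_le_mul_of_nonneg_left
      (by simpa using (lipschitzWith_circleMap 0 1).dist_le_mul s t) hK
  rw [mem_sphere_zero_iff_norm] at hx hy
  have hx0 : x ≠ 0 := norm_ne_zero_iff.mp (by simp [hx])
  have hy0 : y ≠ 0 := norm_ne_zero_iff.mp (by simp [hy])
  have hcy := circleMap_zero_one_arg hy
  have hcx : circleMap 0 1 (arg y + arg (x / y)) = x := by
    rw [← one_mul (1 : ℝ), ← circleMap_zero_mul, hcy,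
      circleMap_zero_one_arg (by rw [norm_div, hx, hy, div_one]), mul_div_cancel₀ _ hy0]
  calc dist (g x) (g y) = dist (g (circleMap 0 1 (arg y + arg (x / y))))
        (g (circleMap 0 1 (arg y))) := by rw [hcx, hcy]
    _ ≤ K * dist (arg y + arg (x / y)) (arg y) :=
        dist_le_mul_dist_of_forall_dist_lt hq hr hqloc _ _
    _ = K * InnerProductGeometry.angle x y := by
        rw [angle_eq_abs_arg hx0 hy0, Real.dist_eq, add_sub_cancel_left]
    _ ≤ K * (π / 2 * ‖x - y‖) := mul_le_mul_of_nonneg_left (angle_le_mul_norm_sub hx hy) hK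
    _ = π / 2 * K * dist x y := by rw [dist_eq_norm]; ring

lemma norm_sub_le_of_semiconj_windingMap_of_norm_sub_lt {f g : ℂ → ℂ} {L r : ℝ} (hL : 0 ≤ L)
    (hf : ∀ a ∈ sphere (0 : ℂ) 1, ∀ b ∈ sphere (0 : ℂ) 1, ‖f a - f b‖ ≤ L * ‖a - b‖)
    (hgr : ∀ z ∈ sphere (0 : ℂ) 1, r ≤ ‖g z‖)
    (hfW : ∀ z ∈ sphere (0 : ℂ) 1, f (windingMap z) = windingMap (g z))
    {z w : ℂ} (hz : z ∈ sphere (0 : ℂ) 1) (hw : w ∈ sphere (0 : ℂ) 1) (h : ‖g z - g w‖ < r) :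
    ‖g z - g w‖ ≤ 2 * L * ‖z - w‖ := by
  have hzw : ‖z + w‖ ≤ 2 := by
    rw [mem_sphere_zero_iff_norm] at hz hw
    linarith [norm_add_le z w]
  calc ‖g z - g w‖ ≤ ‖windingMap (g z) - windingMap (g w)‖ :=
        norm_sub_le_norm_windingMap_sub
          (re_mul_conj_nonneg_of_norm_sub_le (h.le.trans (hgr w hw)))
    _ = ‖f (windingMap z) - f (windingMap w)‖ := by rw [hfW z hz, hfW w hw]
    _ ≤ L * (‖z - w‖ * ‖z + w‖) :=
        norm_windingMap_sub_windingMap hz hw ▸ hf _ (windingMap_mem_sphere hz) _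
          (windingMap_mem_sphere hw)
    _ ≤ 2 * L * ‖z - w‖ := by
        nlinarith [mul_nonneg hL (mul_nonneg (norm_nonneg (z - w)) (sub_nonneg.mpr hzw))]

lemma mul_norm_sub_le_of_semiconj_windingMap {f g : ℂ → ℂ} {ℓ r K : ℝ} (hr : 0 < r)
    (hℓK : ℓ ≤ K)
    (hf : ∀ a ∈ sphere (0 : ℂ) 1, ∀ b ∈ sphere (0 : ℂ) 1, ℓ * ‖a - b‖ ≤ ‖f a - f b‖)
    (hgr : ∀ z ∈ sphere (0 : ℂ) 1, r ≤ ‖g z‖)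
    (hgsym : ∀ z ∈ sphere (0 : ℂ) 1, g (-z) = -g z)
    (hfW : ∀ z ∈ sphere (0 : ℂ) 1, f (windingMap z) = windingMap (g z))
    (hg : ∀ a ∈ sphere (0 : ℂ) 1, ∀ b ∈ sphere (0 : ℂ) 1, ‖g a - g b‖ ≤ K * ‖a - b‖)
    {a b : ℂ} (ha : a ∈ sphere (0 : ℂ) 1) (hb : b ∈ sphere (0 : ℂ) 1) :
    r * ℓ * ‖a - b‖ ≤ K * ‖g a - g b‖ := by
  rcases eq_or_ne (a + b) 0 with hab | hab
  · obtain rfl : b = -a := eq_neg_of_add_eq_zero_right hab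
    have h2a : ‖a - -a‖ = 2 := by
      rw [sub_neg_eq_add, ← two_mul, norm_mul, Complex.norm_two,
        mem_sphere_zero_iff_norm.mp ha, mul_one]
    have hga : ‖g a - g (-a)‖ = 2 * ‖g a‖ := by
      rw [hgsym a ha, sub_neg_eq_add, ← two_mul, norm_mul, Complex.norm_two]
    have hK : 0 ≤ K := by nlinarith [hg a ha (-a) hb, norm_nonneg (g a)]
    rw [h2a, hga]
    nlinarith [mul_le_mul_of_nonneg_left (hgr a ha) hK, mul_le_mul_of_nonneg_left hℓK hr.le]
  · have hgab : ‖g a + g b‖ ≤ K * ‖a + b‖ := by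
      simpa [hgsym b hb] using hg a ha (-b) (by simpa using hb)
    have hchain : r * ℓ * ‖a - b‖ * ‖a + b‖ ≤ K * ‖g a - g b‖ * ‖a + b‖ :=
      calc r * ℓ * ‖a - b‖ * ‖a + b‖ = r * (ℓ * ‖windingMap a - windingMap b‖) := by
            rw [norm_windingMap_sub_windingMap ha hb]; ring
        _ ≤ r * ‖windingMap (g a) - windingMap (g b)‖ := by
            rw [← hfW a ha, ← hfW b hb]
            gcongr
            exact hf _ (windingMap_mem_sphere ha) _ (windingMap_mem_sphere hb)
        _ ≤ ‖g a - g b‖ * ‖g a + g b‖ := by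
            rw [← norm_sq_sub_sq]
            exact mul_norm_windingMap_sub_le hr (hgr a ha) (hgr b hb)
        _ ≤ K * ‖g a - g b‖ * ‖a + b‖ := by
            rw [mul_comm K, mul_assoc]
            gcongr
    exact le_of_mul_le_mul_right hchain (norm_pos_iff.mpr hab)

theorem winding_symmetrization_biLipschitz_general (f g : ℂ → ℂ) (L ℓ r : ℝ)
    (hr0 : 0 < r)
    (hbil : ∀ a ∈ Metric.sphere (0 : ℂ) 1, ∀ b ∈ Metric.sphere (0 : ℂ) 1,
      ℓ * ‖a - b‖ ≤ ‖f a - f b‖ ∧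
      ‖f a - f b‖ ≤ L * ‖a - b‖)
    (hrmin : IsLeast {m : ℝ | ∃ z ∈ Metric.sphere (0 : ℂ) 1, m = ‖f z‖} r)
    (hgcont : ContinuousOn g (Metric.sphere (0 : ℂ) 1))
    (hgsym : ∀ z ∈ Metric.sphere (0 : ℂ) 1, g (-z) = -g z)
    (hfW : ∀ z ∈ Metric.sphere (0 : ℂ) 1, f (windingMap z) = windingMap (g z)) :
    ∀ a ∈ Metric.sphere (0 : ℂ) 1, ∀ b ∈ Metric.sphere (0 : ℂ) 1,
      (r * ℓ / (2 * π * L)) * ‖a - b‖ ≤ ‖g a - g b‖ ∧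
      ‖g a - g b‖ ≤ (π * L) * ‖a - b‖ := by
  have hgr : ∀ z ∈ sphere (0 : ℂ) 1, r ≤ ‖g z‖ := fun z hz => by
    simpa [hfW z hz, norm_windingMap] using hrmin.2 ⟨_, windingMap_mem_sphere hz, rfl⟩
  have hLℓ : ℓ * 2 ≤ ‖f 1 - f (-1)‖ ∧ ‖f 1 - f (-1)‖ ≤ L * 2 := by
    simpa [show (1 : ℂ) + 1 = 2 by norm_num] using hbil 1 (by simp) (-1) (by simp)
  have hL : 0 ≤ L := by linarith [norm_nonneg (f 1 - f (-1))]
  have hloc : ∀ z ∈ sphere (0 : ℂ) 1, ∀ w ∈ sphere (0 : ℂ) 1,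
      dist (g z) (g w) < r → dist (g z) (g w) ≤ 2 * L * dist z w := fun z hz w hw => by
    simpa only [dist_eq_norm] using norm_sub_le_of_semiconj_windingMap_of_norm_sub_lt hL
      (fun a ha b hb => (hbil a ha b hb).2) hgr hfW hz hw
  have hupper : ∀ a ∈ sphere (0 : ℂ) 1, ∀ b ∈ sphere (0 : ℂ) 1,
      ‖g a - g b‖ ≤ π * L * ‖a - b‖ := fun a ha b hb => by
    simpa only [dist_eq_norm, show π / 2 * (2 * L) = π * L by ring] using
      dist_le_pi_div_two_mul_dist_of_forall_dist_lt hgcont hr0 (by positivity) hloc ha hb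
  intro a ha b hb
  refine ⟨?_, hupper a ha b hb⟩
  have hlower := mul_norm_sub_le_of_semiconj_windingMap hr0
    (by nlinarith [pi_gt_three] : ℓ ≤ π * L) (fun a ha b hb => (hbil a ha b hb).1) hgr hgsym hfW
    hupper ha hb
  rcases hL.eq_or_lt with rfl | hL0
  · simp -- the coefficient is `r * ℓ / 0 = 0`
  rw [div_mul_eq_mul_div, div_le_iff₀ (by positivity)]
  nlinarith [mul_nonneg (mul_nonneg pi_pos.le hL) (norm_nonneg (g a - g b))]

theorem winding_symmetrization_biLipschitz (f g : ℂ → ℂ) (L ℓ r : ℝ)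
    (hr0 : 0 < r)
    (hf0 : ∀ z ∈ Metric.sphere (0 : ℂ) 1, f z ≠ 0)
    (hbil : ∀ a ∈ Metric.sphere (0 : ℂ) 1, ∀ b ∈ Metric.sphere (0 : ℂ) 1,
      ℓ * ‖a - b‖ ≤ ‖f a - f b‖ ∧
      ‖f a - f b‖ ≤ L * ‖a - b‖)
    (hrmin : IsLeast {m : ℝ | ∃ z ∈ Metric.sphere (0 : ℂ) 1, m = ‖f z‖} r)
    (hgcont : ContinuousOn g (Metric.sphere (0 : ℂ) 1))
    (hg0 : ∀ z ∈ Metric.sphere (0 : ℂ) 1, g z ≠ 0)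
    (hgsym : ∀ z ∈ Metric.sphere (0 : ℂ) 1, g (-z) = -g z)
    (hfW : ∀ z ∈ Metric.sphere (0 : ℂ) 1, f (windingMap z) = windingMap (g z)) :
    ∀ a ∈ Metric.sphere (0 : ℂ) 1, ∀ b ∈ Metric.sphere (0 : ℂ) 1,
      (r * ℓ / (2 * π * L)) * ‖a - b‖ ≤ ‖g a - g b‖ ∧
      ‖g a - g b‖ ≤ (π * L) * ‖a - b‖ :=
  winding_symmetrization_biLipschitz_general f g L ℓ r hr0 hbil hrmin hgcont hgsym hfW
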